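/- Let t ≥ 1 and n > t be integers, set m = t²+t+1 and d = 2t+n. Define χ : ℕ³ → (ZMod m) × (ZMod n) by χ(p,q,r) = (p − t·q mod m, p + q + r mod n). Then χ is a d-polychromatic simple Q_2-coloring with m·n colors (χ is surjective and d-polychromatic). -/

import Mathlib

/-!
Write `m = t² + t + 1`. A subface with stars at `s₁ < s₂` and with `e₁, e₂, e₃` of the free bits
set in its three blocks has colour `(e₁ - t e₂ + f s₁ + g s₂, e₁ + e₂ + e₃ + σ)` for some `f`, `g`
and `σ` determined by the region counts, where `e₁ < s₁`, `e₂ < s₂ - s₁` and `e₃ ≤ d - s₂`.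
Since `-t (t + 1) ≡ 1 (mod m)`, every residue mod `m` is `e₁ - t e₂` with `e₁, e₂ ≤ t`
(the base-`(t + 1)` digits of `(t + 1) x`). Stars at `(t, 2t + 1)` or `(t + 1, 2t + 1)` allow every
`e₃ < n`, and one of them works unless the first target has first digit `t` and the second one has
second digit `t`. In that case the targets for `(t, 2t + 2)` and `(t + 1, 2t + 2)` differ by some
`1 ≤ K ≤ t`, and carrying digits gives representations of them whose digit sums differ by a number
in `[1, t]`, hence differ mod `n > t`. So at least one of the two avoids the single value of `e₃`
that the shorter last block cannot supply.
-/

/-- A simple `Q_ℓ`-coloring `χ : ℕ^{ℓ+1} → C` is `d`-polychromatic if for every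
embedded `Q_d`, encoded by region counts `a_0, …, a_d` (given by `a : ℕ → ℕ`; only
the first `d+1` values are used), and every color `c`, some `Q_ℓ`-subface receives
color `c`.  A subface is given by selected star positions `0 < s 1 < ⋯ < s ℓ < d+1`
(with conventions `s 0 = 0`, `s (ℓ+1) = d+1`) and bits `ε k ∈ {0,1}` for the
unselected stars; its tuple is `p j = ∑_{s j ≤ i < s (j+1)} a i + ∑_{s j < k < s (j+1)} ε k`. -/
def PolyColoring (ℓ d : ℕ) {C : Type*} (χ : (Fin (ℓ + 1) → ℕ) → C) : Prop :=
  ∀ a : ℕ → ℕ, ∀ c : C, ∃ s : ℕ → ℕ, ∃ ε : ℕ → ℕ,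
    s 0 = 0 ∧ s (ℓ + 1) = d + 1 ∧ (∀ j, j ≤ ℓ → s j < s (j + 1)) ∧ (∀ k, ε k ≤ 1) ∧
    χ (fun j => (∑ i ∈ Finset.Ico (s j.1) (s (j.1 + 1)), a i) +
                (∑ k ∈ Finset.Ioo (s j.1) (s (j.1 + 1)), ε k)) = c

open Finset

lemma sum_Ioo_ite_eq {lo hi e : ℕ} (P : ℕ → Prop) [DecidablePred P] (he : lo + e < hi)
    (hP : ∀ k, lo < k → k < hi → (P k ↔ k ≤ lo + e)) :
    ∑ k ∈ Ioo lo hi, (if P k then 1 else 0) = e := by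
  rw [sum_boole, show (Ioo lo hi).filter P = Ioc lo (lo + e) by
    ext k
    simp only [mem_filter, mem_Ioo, mem_Ioc]
    constructor
    · rintro ⟨⟨hlo, hhi⟩, hk⟩
      exact ⟨hlo, (hP k hlo hhi).mp hk⟩
    · rintro ⟨hlo, hk⟩
      exact ⟨⟨hlo, by omega⟩, (hP k hlo (by omega)).mpr hk⟩]
  simp

lemma polyColoring_two_of_exists_blocks {d : ℕ} {C : Type*} {χ : (Fin 3 → ℕ) → C}
    (h : ∀ (a : ℕ → ℕ) (c : C), ∃ s₁ s₂ e₁ e₂ e₃ : ℕ,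
      e₁ < s₁ ∧ s₁ + e₂ < s₂ ∧ s₂ + e₃ ≤ d ∧
      χ ![∑ i ∈ range s₁, a i + e₁, ∑ i ∈ Ico s₁ s₂, a i + e₂, ∑ i ∈ Ico s₂ (d + 1), a i + e₃]
        = c) :
    PolyColoring 2 d χ := by
  intro a c
  obtain ⟨s₁, s₂, e₁, e₂, e₃, h₁, h₂, h₃, hc⟩ := h a c
  refine ⟨fun j => if j = 0 then 0 else if j = 1 then s₁ else if j = 2 then s₂ else d + 1,
    fun k => if k ≤ e₁ ∨ s₁ < k ∧ k ≤ s₁ + e₂ ∨ s₂ < k ∧ k ≤ s₂ + e₃ then 1 else 0,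
    rfl, rfl, fun j hj => by interval_cases j <;> simp <;> omega,
    fun _ => ite_le_one le_rfl zero_le_one, ?_⟩
  convert hc using 2
  funext j
  fin_cases j
  · simp only [Fin.zero_eta, Fin.isValue, ↓reduceIte, zero_add, one_ne_zero,
      Matrix.cons_val_zero, ← range_eq_Ico]
    congr 1
    exact sum_Ioo_ite_eq _ (by omega) fun k _ _ => by omega
  · simp only [Fin.mk_one, Fin.isValue, one_ne_zero, ↓reduceIte, Nat.reduceAdd,
      OfNat.ofNat_ne_zero, OfNat.ofNat_ne_one, Matrix.cons_val_one, Matrix.cons_val_zero]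
    congr 1
    exact sum_Ioo_ite_eq _ (by omega) fun k _ _ => by omega
  · simp only [Fin.reduceFinMk, OfNat.ofNat_ne_zero, OfNat.ofNat_ne_one,
      ↓reduceIte, Nat.reduceAdd, Nat.reduceEqDiff, Matrix.cons_val]
    congr 1
    exact sum_Ioo_ite_eq _ (by omega) fun k _ _ => by omega

lemma ZMod.exists_natCast_add_eq {n : ℕ} [NeZero n] (σ : ℕ) (g : ZMod n) :
    ∃ e < n, ((σ + e : ℕ) : ZMod n) = g :=
  ⟨(g - σ).val, ZMod.val_lt _, by push_cast [ZMod.natCast_zmod_val]; ring⟩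

lemma ZMod.exists_natCast_add_eq_of_ne {n : ℕ} [NeZero n] (σ : ℕ) (g : ZMod n)
    (hσ : (σ : ZMod n) ≠ g + 1) : ∃ e, e + 1 < n ∧ ((σ + e : ℕ) : ZMod n) = g := by
  obtain ⟨e, he, hg⟩ := ZMod.exists_natCast_add_eq σ g
  refine ⟨e, lt_of_le_of_ne he fun he' => hσ ?_, hg⟩
  have h0 : ((e + 1 : ℕ) : ZMod n) = 0 := he' ▸ ZMod.natCast_self n
  push_cast at hg h0
  linear_combination hg - h0

lemma ZMod.natCast_ne_natCast_of_lt {n a b : ℕ} (hab : a < b) (hb : b < a + n) :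
    (a : ZMod n) ≠ b := by
  obtain ⟨δ, rfl⟩ := Nat.exists_eq_add_of_lt hab
  rw [Nat.cast_add, Nat.cast_add, ne_eq, add_assoc, left_eq_add, ← Nat.cast_add,
    ZMod.natCast_eq_zero_iff]
  exact fun h => absurd (Nat.le_of_dvd δ.succ_pos h) (by omega)

section Digits

variable {t : ℕ}

lemma natCast_sq_add_self_add_one : (t : ZMod (t ^ 2 + t + 1)) ^ 2 + t + 1 = 0 := by
  exact_mod_cast ZMod.natCast_self (t ^ 2 + t + 1)

lemma exists_digits (x : ZMod (t ^ 2 + t + 1)) :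
    ∃ e₁ e₂ : ℕ, e₂ ≤ t ∧ (e₁ < t ∨ e₁ = t ∧ e₂ = 0) ∧
      (e₁ - t * e₂ : ZMod (t ^ 2 + t + 1)) = x := by
  -- take the base-`(t + 1)` digits of `(t + 1) x`, using `-t (t + 1) ≡ 1`
  set y := ((t : ZMod (t ^ 2 + t + 1)) + 1) * x with hy
  have hyv : (y.val : ZMod (t ^ 2 + t + 1)) = y := ZMod.natCast_zmod_val y
  have hlt := ZMod.val_lt y
  rw [← Nat.div_add_mod y.val (t + 1)] at hyv hlt
  have hr := Nat.mod_lt y.val t.succ_pos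
  generalize y.val / (t + 1) = q, y.val % (t + 1) = r at hyv hlt hr
  refine ⟨q, r, Nat.lt_succ_iff.mp hr, ?_, ?_⟩
  · rcases lt_trichotomy q t with h | rfl | h
    · exact .inl h
    · exact .inr ⟨rfl, by nlinarith⟩
    · nlinarith
  · push_cast at hyv
    linear_combination (-(t : ZMod (t ^ 2 + t + 1))) * (hyv.trans hy) +
      ((q : ZMod (t ^ 2 + t + 1)) - x) * natCast_sq_add_self_add_one

lemma exists_digits_add_natCast_ne {n K : ℕ} (hK : 0 < K) (hKt : K ≤ t) (hn : t < n)
    (u : ZMod (t ^ 2 + t + 1)) :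
    ∃ c₁ c₂ d₁ d₂ : ℕ, c₁ < t ∧ c₂ ≤ t + 1 ∧ d₁ ≤ t ∧ d₂ ≤ t ∧
      (c₁ - t * c₂ : ZMod (t ^ 2 + t + 1)) = u ∧ (d₁ - t * d₂ : ZMod (t ^ 2 + t + 1)) = u + K ∧
      ((c₁ + c₂ : ℕ) : ZMod n) ≠ ((d₁ + d₂ : ℕ) : ZMod n) := by
  obtain ⟨f₁, f₂, hf₂, hf₁, rfl⟩ := exists_digits u
  rcases le_or_gt (f₁ + K) t with hle | hgt
  · exact ⟨f₁, f₂, f₁ + K, f₂, by omega, by omega, hle, hf₂, rfl, by push_cast; ring,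
      ZMod.natCast_ne_natCast_of_lt (by omega) (by omega)⟩
  -- the first digit overflows; carry it using `-t (t + 1) ≡ 1`
  obtain ⟨j, hj⟩ : ∃ j, f₁ + K = t + 1 + j := ⟨f₁ + K - (t + 1), by omega⟩
  have hj' := congrArg (Nat.cast : ℕ → ZMod (t ^ 2 + t + 1)) hj
  push_cast at hj'
  rcases f₂ with _ | f₂
  · obtain ⟨i, rfl⟩ : ∃ i, f₁ = i + 1 := ⟨f₁ - 1, by omega⟩
    refine ⟨i, t + 1, j, t, by omega, le_rfl, by omega, le_rfl, ?_, ?_,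
      (ZMod.natCast_ne_natCast_of_lt (by omega) (by omega)).symm⟩
    · push_cast
      linear_combination (-1 : ZMod (t ^ 2 + t + 1)) * natCast_sq_add_self_add_one
    · push_cast at hj' ⊢
      linear_combination -hj' - natCast_sq_add_self_add_one
  · exact ⟨f₁, f₂ + 1, j + 1, f₂, by omega, by omega, by omega, by omega, rfl,
      by push_cast; linear_combination -hj',
      (ZMod.natCast_ne_natCast_of_lt (by omega) (by omega)).symm⟩

lemma exists_subface_digits {n : ℕ} (ht : 1 ≤ t) (hn : t < n) (f g : ℕ → ZMod (t ^ 2 + t + 1))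
    (σ : ZMod n) :
    ∃ s₁ s₂ e₁ e₂ e₃ : ℕ, e₁ < s₁ ∧ s₁ + e₂ < s₂ ∧ s₂ + e₃ ≤ 2 * t + n ∧
      (e₁ - t * e₂ : ZMod (t ^ 2 + t + 1)) = f s₁ + g s₂ ∧
      ((e₁ + e₂ + e₃ : ℕ) : ZMod n) = σ := by
  have : NeZero n := ⟨by omega⟩
  obtain ⟨x₁, x₂, hx₂, hx₁, hX⟩ := exists_digits (f t + g (2 * t + 1))
  obtain ⟨y₁, y₂, hy₂, hy₁, hY⟩ := exists_digits (f (t + 1) + g (2 * t + 1))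
  by_cases hA : x₁ < t
  · obtain ⟨e₃, he₃, hσ⟩ := ZMod.exists_natCast_add_eq (x₁ + x₂) σ
    exact ⟨t, 2 * t + 1, x₁, x₂, e₃, hA, by omega, by omega, hX, hσ⟩
  by_cases hB : y₂ < t
  · obtain ⟨e₃, he₃, hσ⟩ := ZMod.exists_natCast_add_eq (y₁ + y₂) σ
    exact ⟨t + 1, 2 * t + 1, y₁, y₂, e₃, by omega, by omega, by omega, hY, hσ⟩
  obtain ⟨hx₁t, rfl⟩ : x₁ = t ∧ x₂ = 0 := by omega
  obtain hy₂t : y₂ = t := by omega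
  rw [hx₁t] at hX
  rw [hy₂t] at hY
  have hW : f (t + 1) + g (2 * t + 2) =
      f t + g (2 * t + 2) + ((y₁ + 1 : ℕ) : ZMod (t ^ 2 + t + 1)) := by
    push_cast at hX hY ⊢
    linear_combination hX - hY - natCast_sq_add_self_add_one
  obtain ⟨c₁, c₂, d₁, d₂, hc₁, hc₂, hd₁, hd₂, hC, hD, hne⟩ :=
    exists_digits_add_natCast_ne (K := y₁ + 1) (by omega) (by omega) hn (f t + g (2 * t + 2))
  -- the last block is one bit shorter, so the two candidates must have different digit sums
  by_cases hσ : ((c₁ + c₂ : ℕ) : ZMod n) = σ + 1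
  · obtain ⟨e₃, he₃, hσ'⟩ := ZMod.exists_natCast_add_eq_of_ne (d₁ + d₂) σ (hσ ▸ hne.symm)
    exact ⟨t + 1, 2 * t + 2, d₁, d₂, e₃, by omega, by omega, by omega, hW ▸ hD, hσ'⟩
  · obtain ⟨e₃, he₃, hσ'⟩ := ZMod.exists_natCast_add_eq_of_ne (c₁ + c₂) σ hσ
    exact ⟨t, 2 * t + 2, c₁, c₂, e₃, by omega, by omega, by omega, hC, hσ'⟩

end Digits

def residueColoring (t n : ℕ) (v : Fin 3 → ℕ) : ZMod (t ^ 2 + t + 1) × ZMod n :=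
  (v 0 - t * v 1, v 0 + v 1 + v 2)

lemma residueColoring_surjective (t n : ℕ) [NeZero n] :
    Function.Surjective (residueColoring t n) := by
  rintro ⟨x, y⟩
  refine ⟨![x.val, 0, (y - x.val).val], ?_⟩
  simp [residueColoring]

lemma residueColoring_blocks {t n : ℕ} (a : ℕ → ℕ) {s₁ s₂ d e₁ e₂ e₃ : ℕ} (h₁₂ : s₁ ≤ s₂)
    (h₂ : s₂ ≤ d + 1) {c₁ : ZMod (t ^ 2 + t + 1)} {c₂ : ZMod n}
    (hc₁ : (e₁ - t * e₂ : ZMod (t ^ 2 + t + 1)) =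
      c₁ - ((t : ZMod (t ^ 2 + t + 1)) + 1) * ∑ i ∈ range s₁, (a i : ZMod (t ^ 2 + t + 1)) +
        (t : ZMod (t ^ 2 + t + 1)) * ∑ i ∈ range s₂, (a i : ZMod (t ^ 2 + t + 1)))
    (hc₂ : ((e₁ + e₂ + e₃ : ℕ) : ZMod n) = c₂ - ∑ i ∈ range (d + 1), (a i : ZMod n)) :
    residueColoring t n
      ![∑ i ∈ range s₁, a i + e₁, ∑ i ∈ Ico s₁ s₂, a i + e₂, ∑ i ∈ Ico s₂ (d + 1), a i + e₃] =
      (c₁, c₂) := by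
  have hm₁₂ := sum_range_add_sum_Ico (fun i => (a i : ZMod (t ^ 2 + t + 1))) h₁₂
  have hn₁₂ := sum_range_add_sum_Ico (fun i => (a i : ZMod n)) h₁₂
  have hn₂ := sum_range_add_sum_Ico (fun i => (a i : ZMod n)) h₂
  simp only [residueColoring, Matrix.cons_val_zero, Matrix.cons_val_one, Matrix.cons_val_two,
    Matrix.head_cons, Matrix.tail_cons, Nat.cast_add, Nat.cast_sum, Prod.mk.injEq]
  push_cast at hc₂
  constructor
  · linear_combination hc₁ - (t : ZMod (t ^ 2 + t + 1)) * hm₁₂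
  · linear_combination hc₂ + hn₁₂ + hn₂

theorem statement5 (t n : ℕ) (ht : 1 ≤ t) (hn : t < n) :
    Function.Surjective
      (fun v : Fin 3 → ℕ =>
        ((v 0 - t * v 1, v 0 + v 1 + v 2) : ZMod (t ^ 2 + t + 1) × ZMod n)) ∧
    PolyColoring 2 (2 * t + n)
      (fun v : Fin 3 → ℕ =>
        ((v 0 - t * v 1, v 0 + v 1 + v 2) : ZMod (t ^ 2 + t + 1) × ZMod n)) := by
  have : NeZero n := ⟨by omega⟩
  refine ⟨residueColoring_surjective t n, polyColoring_two_of_exists_blocks fun a ⟨c₁, c₂⟩ => ?_⟩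
  obtain ⟨s₁, s₂, e₁, e₂, e₃, h₁, h₂, h₃, hc₁, hc₂⟩ := exists_subface_digits ht hn
    (fun s => c₁ - ((t : ZMod (t ^ 2 + t + 1)) + 1) * ∑ i ∈ range s, (a i : ZMod (t ^ 2 + t + 1)))
    (fun s => (t : ZMod (t ^ 2 + t + 1)) * ∑ i ∈ range s, (a i : ZMod (t ^ 2 + t + 1)))
    (c₂ - ∑ i ∈ range (2 * t + n + 1), (a i : ZMod n))
  exact ⟨s₁, s₂, e₁, e₂, e₃, h₁, h₂, h₃,
    residueColoring_blocks a (by omega) (by omega) hc₁ hc₂⟩
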